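/- For nonnegative integers n, k, m with n ≤ 2^k, D(2^(k+m) + n − 1) = 2^k·(2^m − 1) − m·n + D(2^k + n − 1). -/

import Mathlib

/-- f m = (#1 digits) - (#0 digits) in the binary expansion of m. -/
def f (m : ℕ) : ℤ :=
  2 * ((Nat.digits 2 m).count 1 : ℤ) - ((Nat.digits 2 m).length : ℤ)

/-- Cumulated deficient binary digit sum (OEIS A268289), D 0 = 0. -/
def D (n : ℕ) : ℤ := ∑ m ∈ Finset.Icc 1 n, f m

/-!
For `t < 2 ^ k`, the binary expansion of `2 ^ (k + m) + t` is that of `2 ^ k + t` with `m` extra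
zeros inserted after the leading one, so `f (2 ^ (k + m) + t) = f (2 ^ k + t) - m`. Summing over
`t < n` compares the two blocks `D (2 ^ (k + m) + n - 1) - D (2 ^ (k + m) - 1)` and
`D (2 ^ k + n - 1) - D (2 ^ k - 1)`, and `D (2 ^ j - 1) = 2 ^ j - 1` follows from the
pairing `f (2 i) + f (2 i + 1) = 2 f i`.
-/

open Finset

lemma f_one : f 1 = 1 := by
  norm_num [f]

lemma f_two_mul {j : ℕ} (hj : 0 < j) : f (2 * j) = f j - 1 := by
  unfold f
  rw [Nat.digits_def' one_lt_two (by omega), Nat.mul_mod_right, Nat.mul_div_cancel_left _ two_pos]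
  simp only [List.count_cons, List.length_cons]
  push_cast
  ring

lemma f_two_mul_add_one (j : ℕ) : f (2 * j + 1) = f j + 1 := by
  unfold f
  rw [Nat.digits_def' one_lt_two (by omega), Nat.mul_add_mod, Nat.mul_add_div two_pos]
  norm_num [List.count_cons]
  ring

lemma f_two_pow (m : ℕ) : f (2 ^ m) = 1 - m := by
  induction m with
  | zero => simp [f_one]
  | succ m ih =>
    rw [pow_succ', f_two_mul (by positivity), ih]
    push_cast
    ring

lemma f_two_pow_add_add {k t : ℕ} (m : ℕ) (ht : t < 2 ^ k) :
    f (2 ^ (k + m) + t) = f (2 ^ k + t) - m := by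
  induction k generalizing t with
  | zero =>
    obtain rfl : t = 0 := by simpa using ht
    simp [f_two_pow, f_one]
  | succ k ih =>
    obtain ⟨u, rfl | rfl⟩ := Nat.even_or_odd' t
    · have hu : u < 2 ^ k := by rw [pow_succ] at ht; omega
      rw [show 2 ^ (k + 1 + m) + 2 * u = 2 * (2 ^ (k + m) + u) by ring,
        show 2 ^ (k + 1) + 2 * u = 2 * (2 ^ k + u) by ring,
        f_two_mul (by positivity), f_two_mul (by positivity), ih hu]
      ring
    · have hu : u < 2 ^ k := by rw [pow_succ] at ht; omega
      rw [show 2 ^ (k + 1 + m) + (2 * u + 1) = 2 * (2 ^ (k + m) + u) + 1 by ring,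
        show 2 ^ (k + 1) + (2 * u + 1) = 2 * (2 ^ k + u) + 1 by ring,
        f_two_mul_add_one, f_two_mul_add_one, ih hu]
      ring

lemma D_zero : D 0 = 0 := by
  simp [D]

lemma D_succ (n : ℕ) : D (n + 1) = D n + f (n + 1) := by
  rw [D, D, sum_Icc_succ_top (by omega)]

lemma D_two_mul_add_one (m : ℕ) : D (2 * m + 1) = 2 * D m + 1 := by
  induction m with
  | zero => simp [D_succ, D_zero, f_one]
  | succ m ih =>
    rw [show 2 * (m + 1) + 1 = 2 * m + 1 + 1 + 1 by ring, D_succ, D_succ, ih,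
      show 2 * m + 1 + 1 = 2 * (m + 1) by ring, f_two_mul (by omega), f_two_mul_add_one, D_succ]
    ring

lemma D_two_pow_sub_one (k : ℕ) : D (2 ^ k - 1) = 2 ^ k - 1 := by
  induction k with
  | zero => simp [D_zero]
  | succ k ih =>
    have hk : 1 ≤ 2 ^ k := Nat.one_le_two_pow
    rw [show 2 ^ (k + 1) - 1 = 2 * (2 ^ k - 1) + 1 by rw [pow_succ]; omega, D_two_mul_add_one, ih]
    ring

lemma D_two_pow_add_sub_one (k n : ℕ) :
    D (2 ^ k + n - 1) = 2 ^ k - 1 + ∑ t ∈ range n, f (2 ^ k + t) := by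
  induction n with
  | zero => simp [D_two_pow_sub_one]
  | succ n ih =>
    have hk : 1 ≤ 2 ^ k := Nat.one_le_two_pow
    rw [show 2 ^ k + (n + 1) - 1 = 2 ^ k + n - 1 + 1 by omega, D_succ, ih, sum_range_succ,
      show 2 ^ k + n - 1 + 1 = 2 ^ k + n by omega]
    ring

theorem stmt_17 (n k m : ℕ) (h : n ≤ 2 ^ k) :
    D (2 ^ (k + m) + n - 1) = 2 ^ k * (2 ^ m - 1 : ℤ) - m * n + D (2 ^ k + n - 1) := by
  have hshift : ∑ t ∈ range n, f (2 ^ (k + m) + t) = ∑ t ∈ range n, f (2 ^ k + t) - n * m := by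
    rw [sum_congr rfl fun t ht => f_two_pow_add_add m ((mem_range.mp ht).trans_le h),
      sum_sub_distrib, sum_const, card_range, nsmul_eq_mul]
  rw [D_two_pow_add_sub_one, D_two_pow_add_sub_one, hshift, pow_add]
  ring
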